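/- arXiv:1408.1839 — 3 statements merged into one kernel-verified Lean document; each statement's English description precedes it below -/
import Mathlib

section
/- Let n ≥ 1, let A and B be n×n complex matrices, let P₀ be a fixed rank-one orthogonal projection on ℂⁿ, and let μₙ be the normalized Haar probability measure on the unitary group U(n). Then ∫_{U(n)} conj(tr(A·(U P₀ Uᴴ))) · tr(B·(U P₀ Uᴴ)) dμₙ(U) = (tr(Aᴴ B) + tr(Aᴴ)·tr(B)) / (n(n+1)). (This is the paper's trace-integral formula ∫_{P(ℂⁿ)} conj(ρ) ρ' dν = (tr(A†B) + tr(A†)tr(B))/(n+1) for ρ(p)=tr(Ap), ρ'(p)=tr(Bp), with ν = n·μₙ.) -/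
open MeasureTheory Matrix Kronecker

noncomputable instance (k : Type*) [Fintype k] [DecidableEq k] :
    MeasurableSpace (Matrix.unitaryGroup k ℂ) := borel _

/-- `p` is a rank-one orthogonal projection. -/
def IsRankOneProj {k : Type*} [Fintype k] [DecidableEq k] (p : Matrix k k ℂ) : Prop :=
  p.IsHermitian ∧ p * p = p ∧ p.rank = 1

/-!
Write `P₀ = u uᴴ` with `u` a unit vector and `w = U u`. Then `tr (A p_U) = wᴴ A w`, so the
integrand is a combination of the fourth moments `M a b c d = ∫ w_a w̄_b w_c w̄_d dμ`, and the
theorem amounts to `M a b c d = (δ_ab δ_cd + δ_ad δ_cb) / (n (n + 1))`.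

Left invariance of `μ` makes `M` transform as a tensor under every unitary `V` (`w ↦ V w`).
Diagonal phase matrices kill every moment whose indices do not pair up as `{a, c} = {b, d}`.
A unitary whose `i`-th row is `(3/5) e_x + (4/5) e_y` expresses `M i i i i` through
`M x x x x`, `M y y y y` and `M x x y y`; taking `i = x` and `i = y` shows that
`M x x x x` does not depend on `x` and equals `2 M x x y y`. Finally `∑ |w_x|² = 1`
pointwise fixes the common scale `1 / (n (n + 1))`.
-/

open ComplexConjugate ComplexOrder

section RankOneProjection

variable {ι : Type*} [Fintype ι]

lemma Matrix.exists_unit_vector_spanning_range {P : Matrix ι ι ℂ} (hP : P.rank = 1) :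
    ∃ v : ι → ℂ, star v ⬝ᵥ v = 1 ∧ v ∈ LinearMap.range P.mulVecLin ∧
      ∀ x, ∃ c : ℂ, P *ᵥ x = c • v := by
  obtain ⟨⟨w, hw⟩, hw0, hspan⟩ := finrank_eq_one_iff'.mp hP
  have hw0 : w ≠ 0 := fun h => hw0 (Subtype.ext h)
  obtain ⟨r, hr, hrw⟩ := RCLike.pos_iff_exists_ofReal.mp (dotProduct_star_self_pos_iff.mpr hw0)
  have hsqrt : (√r : ℂ) ≠ 0 := by exact_mod_cast (Real.sqrt_pos.mpr hr).ne'
  refine ⟨(√r : ℂ)⁻¹ • w, ?_, Submodule.smul_mem _ _ hw, fun x => ?_⟩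
  · rw [star_smul, smul_dotProduct, dotProduct_smul, ← hrw]
    simp only [star_inv₀, RCLike.star_def, Complex.conj_ofReal, Complex.coe_algebraMap, smul_eq_mul]
    field_simp
    exact_mod_cast (Real.sq_sqrt hr.le).symm
  · obtain ⟨c, hc⟩ := hspan ⟨P *ᵥ x, x, rfl⟩
    refine ⟨c * √r, ?_⟩
    rw [smul_smul, mul_assoc, mul_inv_cancel₀ hsqrt, mul_one]
    exact (congrArg Subtype.val hc).symm

variable [DecidableEq ι]

/-- A Hermitian idempotent `P` fixes the unit vector `v` spanning its range, so
`vᴴ (P x) = (P v)ᴴ x = vᴴ x`, i.e. `P x = (vᴴ x) v`. -/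
lemma IsRankOneProj.exists_eq_vecMulVec {P : Matrix ι ι ℂ} (hP : IsRankOneProj P) :
    ∃ u : ι → ℂ, star u ⬝ᵥ u = 1 ∧ P = vecMulVec u (star u) := by
  obtain ⟨hherm, hidem, hrank⟩ := hP
  obtain ⟨u, hu, ⟨y, rfl⟩, hspan⟩ := exists_unit_vector_spanning_range hrank
  set v := P.mulVecLin y
  have hfix : P *ᵥ v = v := by simp [v, mulVec_mulVec, hidem]
  have hPx : ∀ x, P *ᵥ x = (star v ⬝ᵥ x) • v := by
    intro x
    obtain ⟨c, hc⟩ := hspan x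
    have hc' : star v ⬝ᵥ (P *ᵥ x) = star v ⬝ᵥ x := by
      rw [dotProduct_mulVec, ← hherm.eq, ← star_mulVec, hfix]
    rw [hc, dotProduct_smul, hu, smul_eq_mul, mul_one] at hc'
    rw [hc, hc']
  refine ⟨v, hu, ext fun i j => ?_⟩
  simpa [mul_comm, vecMulVec_apply] using congrFun (hPx (Pi.single j 1)) i

end RankOneProjection

section UnitaryGroup

variable {ι : Type*} [Fintype ι] [DecidableEq ι]

instance : BorelSpace (unitaryGroup ι ℂ) := ⟨rfl⟩

instance : CompactSpace (unitaryGroup ι ℂ) := by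
  have hbdd : IsCompact (Set.univ.pi fun _ => Set.univ.pi fun _ => Metric.closedBall 0 1 :
      Set (Matrix ι ι ℂ)) :=
    isCompact_univ_pi fun _ => isCompact_univ_pi fun _ => isCompact_closedBall 0 1
  refine isCompact_iff_compactSpace.mp <|
    hbdd.of_isClosed_subset (isClosed_unitary (R := Matrix ι ι ℂ)) fun U hU i _ j _ => ?_
  simpa using entry_norm_bound_of_unitary hU i j

lemma Matrix.diagonal_mem_unitaryGroup {θ : ι → ℂ} (hθ : ∀ j, star (θ j) * θ j = 1) :
    diagonal θ ∈ unitaryGroup ι ℂ := by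
  rw [mem_unitaryGroup_iff', star_eq_conjTranspose, diagonal_conjTranspose, diagonal_mul_diagonal]
  exact (congrArg diagonal (funext hθ)).trans diagonal_one

lemma Matrix.exists_mem_unitaryGroup_row_eq (i : ι) {v : ι → ℂ} (hv : star v ⬝ᵥ v = 1) :
    ∃ V ∈ unitaryGroup ι ℂ, ∀ j, V i j = v j := by
  set e : EuclideanSpace ℂ ι := WithLp.toLp 2 (star v)
  have he : Orthonormal ℂ (({i} : Set ι).domRestrict fun _ => e) := by
    refine orthonormal_iff_ite.mpr fun a b => ?_
    rw [if_pos (Subtype.ext (a.2.trans b.2.symm))]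
    change inner ℂ e e = 1
    rw [EuclideanSpace.inner_eq_star_dotProduct]
    simpa [e, dotProduct_comm] using hv
  obtain ⟨b, hb⟩ := he.exists_orthonormalBasis_extension_of_card_eq (by simp)
  have hmem := (EuclideanSpace.basisFun ι ℂ).toMatrix_orthonormalBasis_mem_unitary b
  refine ⟨star ((EuclideanSpace.basisFun ι ℂ).toBasis.toMatrix b), Unitary.star_mem hmem,
    fun j => ?_⟩
  simp [Module.Basis.toMatrix_apply, hb i rfl, e]

lemma Matrix.star_mulVec_dotProduct_mulVec {U : Matrix ι ι ℂ} (hU : U ∈ unitaryGroup ι ℂ)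
    (v : ι → ℂ) : star (U *ᵥ v) ⬝ᵥ (U *ᵥ v) = star v ⬝ᵥ v := by
  rw [star_mulVec, ← dotProduct_mulVec, mulVec_mulVec, ← star_eq_conjTranspose,
    mem_unitaryGroup_iff'.mp hU, one_mulVec]

end UnitaryGroup

section Quartic

variable {ι : Type*} [Fintype ι]

def quartic (a b c d : ι) (x : ι → ℂ) : ℂ := x a * conj (x b) * (x c * conj (x d))

lemma quartic_mulVec (V : Matrix ι ι ℂ) (x : ι → ℂ) (a b c d : ι) :
    quartic a b c d (V *ᵥ x) = ∑ j, ∑ k, ∑ l, ∑ m,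
      V a j * conj (V b k) * (V c l * conj (V d m)) * quartic j k l m x := by
  simp only [quartic, mulVec, dotProduct, map_sum, map_mul]
  rw [Finset.sum_mul_sum, Finset.sum_mul_sum]
  simp_rw [Finset.sum_mul, Finset.mul_sum]
  refine Finset.sum_congr rfl fun j _ => Finset.sum_congr rfl fun k _ =>
    Finset.sum_congr rfl fun l _ => Finset.sum_congr rfl fun m _ => by ring

lemma Matrix.mul_vecMulVec_star_mul_conjTranspose (U : Matrix ι ι ℂ) (w : ι → ℂ) :
    U * vecMulVec w (star w) * Uᴴ = vecMulVec (U *ᵥ w) (star (U *ᵥ w)) := by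
  rw [mul_vecMulVec, vecMulVec_mul, star_mulVec]

lemma Matrix.trace_mul_vecMulVec_star (A : Matrix ι ι ℂ) (w : ι → ℂ) :
    (A * vecMulVec w (star w)).trace = ∑ i, ∑ j, A i j * (conj (w i) * w j) := by
  simp only [mul_vecMulVec, trace_vecMulVec, dotProduct, mulVec, Finset.sum_mul, Pi.star_apply,
    Complex.star_def]
  exact Finset.sum_congr rfl fun i _ => Finset.sum_congr rfl fun j _ => by ring

lemma conj_trace_mul_trace_mul_vecMulVec (A B : Matrix ι ι ℂ) (w : ι → ℂ) :
    conj (A * vecMulVec w (star w)).trace * (B * vecMulVec w (star w)).trace =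
      ∑ i, ∑ j, ∑ k, ∑ l, conj (A i j) * B l k * quartic i j k l w := by
  rw [trace_mul_vecMulVec_star B, Finset.sum_comm, trace_mul_vecMulVec_star A]
  simp only [map_sum, Finset.sum_mul]
  simp only [Finset.mul_sum]
  refine Finset.sum_congr rfl fun i _ => Finset.sum_congr rfl fun j _ =>
    Finset.sum_congr rfl fun k _ => Finset.sum_congr rfl fun l _ => ?_
  simp only [quartic, map_mul, Complex.conj_conj]
  ring

variable [DecidableEq ι]

lemma sum_conj_mul_pairing (A B : Matrix ι ι ℂ) (D : ℂ) :
    ∑ i, ∑ j, ∑ k, ∑ l, conj (A i j) * B l k *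
        (((if i = j ∧ k = l then 1 else 0) + (if i = l ∧ k = j then 1 else 0)) / D) =
      ((Aᴴ * B).trace + Aᴴ.trace * B.trace) / D := by
  simp only [add_div, mul_add, Finset.sum_add_distrib, ite_and, ite_div, zero_div, mul_ite,
    mul_zero, Finset.sum_ite_irrel, Finset.sum_const_zero, Finset.sum_ite_eq,
    Finset.sum_ite_eq', Finset.mem_univ, if_true, mul_one_div]
  simp only [trace, diag_apply, mul_apply, conjTranspose_apply, Finset.sum_mul_sum,
    Finset.sum_div, Complex.star_def]
  rw [add_comm]
  exact congrArg (· + _) Finset.sum_comm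

end Quartic

section FourthMoment

variable {ι : Type*} [Fintype ι] [DecidableEq ι] (μ : Measure (unitaryGroup ι ℂ)) (u : ι → ℂ)

noncomputable def fourthMoment (a b c d : ι) : ℂ := ∫ U, quartic a b c d (U.1 *ᵥ u) ∂μ

lemma fourthMoment_comm_right (a b c d : ι) :
    fourthMoment μ u a b c d = fourthMoment μ u a d c b := by
  simp only [fourthMoment, quartic]
  congr 1 with U
  ring

lemma fourthMoment_comm_pairs (a b c d : ι) :
    fourthMoment μ u a b c d = fourthMoment μ u c d a b := by
  simp only [fourthMoment, quartic]
  congr 1 with U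
  ring

variable [IsProbabilityMeasure μ]

lemma integrable_quartic_mulVec (a b c d : ι) :
    Integrable (fun U : unitaryGroup ι ℂ => quartic a b c d (U.1 *ᵥ u)) μ :=
  Continuous.integrable_of_hasCompactSupport (by unfold quartic; fun_prop)
    (HasCompactSupport.of_compactSpace _)

lemma integral_sum_quartic (f : ι → ι → ι → ι → ℂ) :
    ∫ U, ∑ j, ∑ k, ∑ l, ∑ m, f j k l m * quartic j k l m (U.1 *ᵥ u) ∂μ =
      ∑ j, ∑ k, ∑ l, ∑ m, f j k l m * fourthMoment μ u j k l m := by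
  have hint := fun j k l m => (integrable_quartic_mulVec μ u j k l m).const_mul (f j k l m)
  simp only [fourthMoment, ← integral_const_mul]
  rw [integral_finsetSum _ fun j _ => integrable_finsetSum _ fun k _ =>
    integrable_finsetSum _ fun l _ => integrable_finsetSum _ fun m _ => hint j k l m]
  refine Finset.sum_congr rfl fun j _ => ?_
  rw [integral_finsetSum _ fun k _ =>
    integrable_finsetSum _ fun l _ => integrable_finsetSum _ fun m _ => hint j k l m]
  refine Finset.sum_congr rfl fun k _ => ?_
  rw [integral_finsetSum _ fun l _ => integrable_finsetSum _ fun m _ => hint j k l m]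
  exact Finset.sum_congr rfl fun l _ => integral_finsetSum _ fun m _ => hint j k l m

lemma sum_fourthMoment_diag (hu : star u ⬝ᵥ u = 1) :
    ∑ x, ∑ y, fourthMoment μ u x x y y = 1 := by
  have hpoint : ∀ U : unitaryGroup ι ℂ, ∑ x, ∑ y, quartic x x y y (U.1 *ᵥ u) = 1 := by
    intro U
    have hnorm := star_mulVec_dotProduct_mulVec U.2 u
    rw [hu, dotProduct_comm] at hnorm
    simp only [quartic, ← Finset.sum_mul_sum]
    rw [show ∑ i, (U.1 *ᵥ u) i * conj ((U.1 *ᵥ u) i) = 1 from hnorm, one_mul]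
  have hint := integrable_quartic_mulVec μ u
  calc ∑ x, ∑ y, fourthMoment μ u x x y y
      = ∫ U, ∑ x, ∑ y, quartic x x y y (U.1 *ᵥ u) ∂μ := by
        rw [integral_finsetSum _ fun x _ => integrable_finsetSum _ fun y _ => hint x x y y]
        exact Finset.sum_congr rfl fun x _ =>
          (integral_finsetSum _ fun y _ => hint x x y y).symm
    _ = 1 := by simp [hpoint]

variable [μ.IsMulLeftInvariant]

lemma fourthMoment_eq_sum {V : Matrix ι ι ℂ} (hV : V ∈ unitaryGroup ι ℂ) (a b c d : ι) :
    fourthMoment μ u a b c d = ∑ j, ∑ k, ∑ l, ∑ m,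
      V a j * conj (V b k) * (V c l * conj (V d m)) * fourthMoment μ u j k l m := by
  rw [fourthMoment, ← integral_mul_left_eq_self _ ⟨V, hV⟩, ← integral_sum_quartic]
  simp only [UnitaryGroup.mul_val, ← mulVec_mulVec, quartic_mulVec]

lemma fourthMoment_phase {θ : ι → ℂ} (hθ : ∀ j, star (θ j) * θ j = 1) (a b c d : ι) :
    fourthMoment μ u a b c d =
      θ a * conj (θ b) * (θ c * conj (θ d)) * fourthMoment μ u a b c d := by
  conv_lhs => rw [fourthMoment_eq_sum μ u (diagonal_mem_unitaryGroup hθ)]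
  simp [diagonal_apply, apply_ite (starRingEnd ℂ), ite_mul, mul_ite]

lemma fourthMoment_eq_zero {a b c d : ι} (h : ¬((a = b ∧ c = d) ∨ (a = d ∧ c = b))) :
    fourthMoment μ u a b c d = 0 := by
  have hunit : ∀ m j, star ((Pi.mulSingle m Complex.I : ι → ℂ) j) *
      (Pi.mulSingle m Complex.I : ι → ℂ) j = 1 := by
    intro m j
    by_cases h : j = m <;> simp [h]
  -- The phase `I` goes on an index occurring more often among `a, c` than among `b, d`.
  obtain ⟨m, hm⟩ : ∃ m, ∀ θ : ι → ℂ, θ = Pi.mulSingle m Complex.I →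
      θ a * conj (θ b) * (θ c * conj (θ d)) ≠ 1 := by
    by_cases ha : a = b ∨ a = d
    · refine ⟨c, fun θ hθ => ?_⟩
      by_cases hac : a = c <;> rcases ha with rfl | rfl <;>
        simp_all [Complex.ext_iff, eq_comm]
    · obtain ⟨hab, had⟩ := not_or.mp ha
      refine ⟨a, fun θ hθ => ?_⟩
      by_cases hca : c = a <;>
        norm_num [hθ, hca, Ne.symm hab, Ne.symm had, Complex.ext_iff]
  exact (mul_left_eq_self₀.mp (fourthMoment_phase μ u (hunit m) a b c d).symm).resolve_left
    (hm _ rfl)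

lemma fourthMoment_mix {x y : ι} (hxy : x ≠ y) (i : ι) :
    625 * fourthMoment μ u i i i i = 81 * fourthMoment μ u x x x x
      + 256 * fourthMoment μ u y y y y + 576 * fourthMoment μ u x x y y := by
  -- `(3/5, 4/5)` is a unit vector with rational entries, so no square roots appear.
  set v : ι → ℂ := Pi.single x (3 / 5) + Pi.single y (4 / 5)
  have hsum : ∀ F : ι → ℂ, ∑ j, v j * F j = 3 / 5 * F x + 4 / 5 * F y := by
    intro F
    simp [v, add_mul, Finset.sum_add_distrib, Pi.single_apply]
  have hconj : ∀ j, conj (v j) = v j := by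
    intro j
    simp only [v, Pi.add_apply, Pi.single_apply]
    split_ifs <;> simp [map_ofNat]
  obtain ⟨V, hV, hVi⟩ := exists_mem_unitaryGroup_row_eq i (v := v) (by
    simp only [dotProduct, Pi.star_apply, Complex.star_def, hconj, hsum]
    simp only [v, Pi.add_apply, Pi.single_eq_same, Pi.single_eq_of_ne hxy,
      Pi.single_eq_of_ne hxy.symm, add_zero, zero_add]
    norm_num)
  rw [fourthMoment_eq_sum μ u hV]
  simp only [hVi, hconj, mul_assoc, ← Finset.mul_sum, hsum]
  simp only [fourthMoment_eq_zero μ u, hxy, hxy.symm, not_false_eq_true, and_self,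
    and_false, false_and, or_self, mul_zero, add_zero, zero_add]
  rw [fourthMoment_comm_right μ u x y y x, fourthMoment_comm_right μ u y x x y,
    fourthMoment_comm_pairs μ u y y x x]
  ring

lemma fourthMoment_self_eq (x y : ι) : fourthMoment μ u x x x x = fourthMoment μ u y y y y := by
  rcases eq_or_ne x y with rfl | hxy
  · rfl
  · linear_combination (fourthMoment_mix μ u hxy x - fourthMoment_mix μ u hxy y) / 625

lemma fourthMoment_self_eq_two_mul {x y : ι} (hxy : x ≠ y) :
    fourthMoment μ u x x x x = 2 * fourthMoment μ u x x y y := by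
  linear_combination (fourthMoment_mix μ u hxy x - 256 * fourthMoment_self_eq μ u x y) / 288

lemma fourthMoment_diag (hu : star u ⬝ᵥ u = 1) (x y : ι) :
    fourthMoment μ u x x y y =
      (1 + if x = y then 1 else 0) / (Fintype.card ι * (Fintype.card ι + 1)) := by
  have hdiag : ∀ a b, fourthMoment μ u a a b b =
      (1 + if a = b then 1 else 0) * (fourthMoment μ u x x x x / 2) := by
    intro a b
    rcases eq_or_ne a b with rfl | hab
    · rw [if_pos rfl, fourthMoment_self_eq μ u a x]
      ring
    · rw [if_neg hab, fourthMoment_self_eq μ u x a, fourthMoment_self_eq_two_mul μ u hab]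
      ring
  have hsum := sum_fourthMoment_diag μ u hu
  generalize fourthMoment μ u x x x x / 2 = q at hdiag
  have hq : (Fintype.card ι * (Fintype.card ι + 1)) * q = 1 := by
    simp only [hdiag, add_mul, one_mul, ite_mul, zero_mul, Finset.sum_add_distrib,
      Finset.sum_const, Finset.card_univ, nsmul_eq_mul, Finset.sum_ite_eq, Finset.mem_univ,
      if_true] at hsum
    linear_combination hsum
  rw [hdiag, eq_one_div_of_mul_eq_one_right hq, mul_one_div]

lemma fourthMoment_eq (hu : star u ⬝ᵥ u = 1) (a b c d : ι) :
    fourthMoment μ u a b c d =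
      ((if a = b ∧ c = d then 1 else 0) + (if a = d ∧ c = b then 1 else 0)) /
        (Fintype.card ι * (Fintype.card ι + 1)) := by
  by_cases h : (a = b ∧ c = d) ∨ (a = d ∧ c = b)
  · rcases h with ⟨rfl, rfl⟩ | ⟨rfl, rfl⟩
    · rw [fourthMoment_diag μ u hu]
      by_cases hac : a = c <;> simp [hac, eq_comm]
    · rw [fourthMoment_comm_right, fourthMoment_diag μ u hu]
      by_cases hac : a = c <;> simp [hac, eq_comm, add_comm]
  · rw [fourthMoment_eq_zero μ u h, if_neg fun h' => h (Or.inl h'),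
      if_neg fun h' => h (Or.inr h'), add_zero, zero_div]

end FourthMoment

theorem trace_integral_formula_general (n : ℕ)
    (A B P₀ : Matrix (Fin n) (Fin n) ℂ) (hP₀ : IsRankOneProj P₀)
    (μ : Measure (Matrix.unitaryGroup (Fin n) ℂ))
    [IsProbabilityMeasure μ] [μ.IsMulLeftInvariant] :
    ∫ U : Matrix.unitaryGroup (Fin n) ℂ,
        (starRingEnd ℂ) ((A * (U.1 * P₀ * (U.1)ᴴ)).trace)
          * (B * (U.1 * P₀ * (U.1)ᴴ)).trace ∂μ
      = ((Aᴴ * B).trace + (Aᴴ).trace * B.trace) / ((n : ℂ) * ((n : ℂ) + 1)) := by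
  obtain ⟨u, hu, rfl⟩ := hP₀.exists_eq_vecMulVec
  simp_rw [mul_vecMulVec_star_mul_conjTranspose, conj_trace_mul_trace_mul_vecMulVec]
  rw [integral_sum_quartic]
  simp_rw [fourthMoment_eq μ u hu, Fintype.card_fin]
  exact sum_conj_mul_pairing A B _

/-- Trace-integral formula:
`∫ conj(tr(A p_U)) tr(B p_U) dμₙ = (tr(AᴴB) + tr(Aᴴ) tr B)/(n(n+1))`. -/
theorem trace_integral_formula (n : ℕ) (hn : 1 ≤ n)
    (A B P₀ : Matrix (Fin n) (Fin n) ℂ) (hP₀ : IsRankOneProj P₀)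
    (μ : Measure (Matrix.unitaryGroup (Fin n) ℂ))
    [IsProbabilityMeasure μ] [μ.IsMulLeftInvariant] :
    ∫ U : Matrix.unitaryGroup (Fin n) ℂ,
        (starRingEnd ℂ) ((A * (U.1 * P₀ * (U.1)ᴴ)).trace)
          * (B * (U.1 * P₀ * (U.1)ᴴ)).trace ∂μ
      = ((Aᴴ * B).trace + (Aᴴ).trace * B.trace) / ((n : ℂ) * ((n : ℂ) + 1)) :=
  trace_integral_formula_general n A B P₀ hP₀ μ
end

section
/- (Core of the Segre pull-back isomorphism.) Let n > 2 and m > 2. The linear map Φ sending a complex matrix M indexed by (Fin n × Fin m) × (Fin n × Fin m) to the function Φ(M)(p,q) := tr(M·(p ⊗ₖ q)) on pairs of rank-one orthogonal projections (p on ℂⁿ, q on ℂᵐ) is injective — i.e., if tr(M·(p ⊗ₖ q)) = 0 for all rank-one orthogonal projections p on ℂⁿ and q on ℂᵐ, then M = 0 — and its range is exactly the linear span of the product functions (p,q) ↦ tr(Ap)·tr(Bq) with A an n×n and B an m×m complex matrix. -/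
/-!
Rank-one projections span all complex matrices: by polarization `v wᴴ` is a combination of
four matrices `u uᴴ`, and each nonzero `u uᴴ` is a multiple of the projection onto `ℂ u`.
Hence the Kronecker products `p ⊗ₖ q` span all matrices on `ℂⁿ ⊗ ℂᵐ`, and nondegeneracy of
the trace pairing gives injectivity. For the range, `tr((A ⊗ₖ B)(p ⊗ₖ q)) = tr(Ap) tr(Bq)`,
and the matrices `A ⊗ₖ B` span everything, so the product functions span the image.
-/

open Matrix Kronecker

open ComplexOrder

namespace Matrix

theorem rank_pos_of_ne_zero {m n K : Type*} [Fintype n] [Field K] {A : Matrix m n K}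
    (hA : A ≠ 0) : 0 < A.rank := by
  classical
  rw [rank, Nat.pos_iff_ne_zero, Ne, Submodule.finrank_eq_zero, LinearMap.range_eq_bot]
  exact fun h => hA (Matrix.toLin'.injective (by rw [map_zero]; exact h))

theorem rank_vecMulVec_of_ne_zero {n K : Type*} [Fintype n] [Field K] {v w : n → K}
    (hv : v ≠ 0) (hw : w ≠ 0) : (vecMulVec v w).rank = 1 :=
  (rank_vecMulVec_le v w).antisymm (rank_pos_of_ne_zero (vecMulVec_ne_zero hv hw))

theorem vecMulVec_star_eq_polarization {k : Type*} (v w : k → ℂ) :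
    vecMulVec v (star w) = (4 : ℂ)⁻¹ • (vecMulVec (v + w) (star (v + w))
      + Complex.I • vecMulVec (v + Complex.I • w) (star (v + Complex.I • w))
      - vecMulVec (v - w) (star (v - w))
      - Complex.I • vecMulVec (v - Complex.I • w) (star (v - Complex.I • w))) := by
  ext a b
  simp only [Matrix.smul_apply, Matrix.add_apply, Matrix.sub_apply, vecMulVec_apply,
    Pi.add_apply, Pi.sub_apply, Pi.smul_apply, Pi.star_apply, star_add, star_sub, star_smul,
    smul_eq_mul, Complex.star_def, Complex.conj_I]
  linear_combination (v a * (starRingEnd ℂ) (w b) - w a * (starRingEnd ℂ) (v b)) / 2 * Complex.I_sq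

variable {R : Type*} [CommSemiring R]

theorem span_image2_kronecker_eq_top {k k' l l' : Type*} [Fintype k] [Fintype k'] [Fintype l]
    [Fintype l'] [DecidableEq k] [DecidableEq k'] [DecidableEq l] [DecidableEq l']
    {s : Set (Matrix k k' R)} {t : Set (Matrix l l' R)}
    (hs : Submodule.span R s = ⊤) (ht : Submodule.span R t = ⊤) :
    Submodule.span R (Set.image2 (· ⊗ₖ ·) s t) = ⊤ := by
  have h := Submodule.map₂_span_span R
    (kroneckerBilinear : Matrix k k' R →ₗ[R] Matrix l l' R →ₗ[R] _) s t
  rw [hs, ht] at h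
  change _ = Submodule.span R (Set.image2 (· ⊗ₖ ·) s t) at h
  refine eq_top_iff.2 ((stdBasis R (k × l) (k' × l')).span_eq.ge.trans (Submodule.span_le.2 ?_))
  rintro _ ⟨⟨⟨i, a⟩, ⟨j, b⟩⟩, rfl⟩
  rw [← h, stdBasis_eq_single, ← mul_one (1 : R), ← single_kronecker_single]
  exact Submodule.apply_mem_map₂ _ Submodule.mem_top Submodule.mem_top

theorem eq_zero_of_trace_mul_kronecker_eq_zero {k l : Type*} [Fintype k] [Fintype l]
    [DecidableEq k] [DecidableEq l] {s : Set (Matrix k k R)} {t : Set (Matrix l l R)}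
    (hs : Submodule.span R s = ⊤) (ht : Submodule.span R t = ⊤)
    {M : Matrix (k × l) (k × l) R} (hM : ∀ p ∈ s, ∀ q ∈ t, (M * (p ⊗ₖ q)).trace = 0) :
    M = 0 := by
  let traceMulLeft : Matrix (k × l) (k × l) R →ₗ[R] R :=
    traceLinearMap _ R R ∘ₗ LinearMap.mulLeft R M
  have hker : Submodule.span R (Set.image2 (· ⊗ₖ ·) s t) ≤ LinearMap.ker traceMulLeft :=
    Submodule.span_le.2 (Set.image2_subset_iff.2 hM)
  rw [span_image2_kronecker_eq_top hs ht, top_le_iff, LinearMap.ker_eq_top] at hker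
  exact ext_iff_trace_mul_right.2 fun X => by simpa [traceMulLeft] using LinearMap.congr_fun hker X

theorem trace_kronecker_mul_kronecker {k l : Type*} [Fintype k] [Fintype l]
    (A p : Matrix k k R) (B q : Matrix l l R) :
    ((A ⊗ₖ B) * (p ⊗ₖ q)).trace = (A * p).trace * (B * q).trace := by
  rw [← mul_kronecker_mul, trace_kronecker]

end Matrix

section RankOneProj

variable {k : Type*} [Fintype k] [DecidableEq k]

theorem isRankOneProj_inv_smul_vecMulVec_star {v : k → ℂ} (hv : v ≠ 0) :
    IsRankOneProj ((star v ⬝ᵥ v)⁻¹ • vecMulVec v (star v)) := by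
  have hc : star v ⬝ᵥ v ≠ 0 := dotProduct_star_self_eq_zero.not.mpr hv
  refine ⟨?_, ?_, ?_⟩
  · rw [IsHermitian, conjTranspose_smul, conjTranspose_vecMulVec, star_star, star_inv₀,
      ← star_dotProduct]
  · rw [smul_mul_smul, vecMulVec_mul_vecMulVec, vecMulVec_smul, smul_smul]
    congr 1
    field_simp
  · rw [rank_smul_of_mem_nonZeroDivisors _ (mem_nonZeroDivisors_of_ne_zero (inv_ne_zero hc)),
      rank_vecMulVec_of_ne_zero hv (star_ne_zero.mpr hv)]

theorem vecMulVec_star_self_mem_span_isRankOneProj (v : k → ℂ) :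
    vecMulVec v (star v) ∈ Submodule.span ℂ {p : Matrix k k ℂ | IsRankOneProj p} := by
  rcases eq_or_ne v 0 with rfl | hv
  · simp
  have hc : star v ⬝ᵥ v ≠ 0 := dotProduct_star_self_eq_zero.not.mpr hv
  rw [← smul_inv_smul₀ hc (vecMulVec v (star v))]
  exact Submodule.smul_mem _ _ (Submodule.subset_span (isRankOneProj_inv_smul_vecMulVec_star hv))

theorem vecMulVec_mem_span_isRankOneProj (v w : k → ℂ) :
    vecMulVec v w ∈ Submodule.span ℂ {p : Matrix k k ℂ | IsRankOneProj p} := by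
  rw [← star_star w, vecMulVec_star_eq_polarization]
  refine Submodule.smul_mem _ _ (Submodule.sub_mem _ (Submodule.sub_mem _
    (Submodule.add_mem _ ?_ (Submodule.smul_mem _ _ ?_)) ?_) (Submodule.smul_mem _ _ ?_)) <;>
  exact vecMulVec_star_self_mem_span_isRankOneProj _

theorem span_setOf_isRankOneProj_eq_top :
    Submodule.span ℂ {p : Matrix k k ℂ | IsRankOneProj p} = ⊤ := by
  refine eq_top_iff.2 ((stdBasis ℂ k k).span_eq.ge.trans (Submodule.span_le.2 ?_))
  rintro _ ⟨⟨i, j⟩, rfl⟩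
  rw [stdBasis_eq_single, single_eq_single_vecMulVec_single]
  exact vecMulVec_mem_span_isRankOneProj _ _

end RankOneProj

section SegrePullback

variable (k l : Type*) [Fintype k] [DecidableEq k] [Fintype l] [DecidableEq l]

/-- The paper's `Φ`: the frame function `ρ ↦ tr(M ρ)` pulled back along the Segre embedding
`(p, q) ↦ p ⊗ₖ q`. -/
noncomputable def segrePullback :
    Matrix (k × l) (k × l) ℂ →ₗ[ℂ]
      ({p : Matrix k k ℂ // IsRankOneProj p} × {q : Matrix l l ℂ // IsRankOneProj q} → ℂ) where
  toFun M pq := (M * ((pq.1 : Matrix k k ℂ) ⊗ₖ (pq.2 : Matrix l l ℂ))).trace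
  map_add' M N := funext fun pq => by rw [Matrix.add_mul, trace_add, Pi.add_apply]
  map_smul' c M := funext fun pq => by rw [Matrix.smul_mul, trace_smul]; rfl

theorem range_segrePullback :
    LinearMap.range (segrePullback k l) = Submodule.span ℂ
      {g | ∃ (A : Matrix k k ℂ) (B : Matrix l l ℂ),
        g = fun pq => (A * (pq.1 : Matrix k k ℂ)).trace * (B * (pq.2 : Matrix l l ℂ)).trace} := by
  have hproducts : {g | ∃ (A : Matrix k k ℂ) (B : Matrix l l ℂ),
        g = fun pq => (A * (pq.1 : Matrix k k ℂ)).trace * (B * (pq.2 : Matrix l l ℂ)).trace} =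
      segrePullback k l '' Set.image2 (· ⊗ₖ ·) Set.univ Set.univ := by
    ext g
    simp [segrePullback, trace_kronecker_mul_kronecker, eq_comm]
  rw [hproducts, Submodule.span_image,
    span_image2_kronecker_eq_top Submodule.span_univ Submodule.span_univ, Submodule.map_top]

end SegrePullback

theorem segre_pullback_iso_general (n m : ℕ) :
    (∀ M : Matrix (Fin n × Fin m) (Fin n × Fin m) ℂ,
      (∀ (p : Matrix (Fin n) (Fin n) ℂ) (q : Matrix (Fin m) (Fin m) ℂ),
        IsRankOneProj p → IsRankOneProj q → (M * (p ⊗ₖ q)).trace = 0) → M = 0)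
    ∧ (Set.range (fun (M : Matrix (Fin n × Fin m) (Fin n × Fin m) ℂ)
          (pq : {p : Matrix (Fin n) (Fin n) ℂ // IsRankOneProj p}
                × {q : Matrix (Fin m) (Fin m) ℂ // IsRankOneProj q}) =>
          (M * ((pq.1 : Matrix (Fin n) (Fin n) ℂ) ⊗ₖ (pq.2 : Matrix (Fin m) (Fin m) ℂ))).trace)
        = ↑(Submodule.span ℂ
            {g : {p : Matrix (Fin n) (Fin n) ℂ // IsRankOneProj p}
                 × {q : Matrix (Fin m) (Fin m) ℂ // IsRankOneProj q} → ℂ |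
              ∃ (A : Matrix (Fin n) (Fin n) ℂ) (B : Matrix (Fin m) (Fin m) ℂ),
                g = fun pq => (A * (pq.1 : Matrix (Fin n) (Fin n) ℂ)).trace
                              * (B * (pq.2 : Matrix (Fin m) (Fin m) ℂ)).trace})) := by
  refine ⟨fun M hM => eq_zero_of_trace_mul_kronecker_eq_zero span_setOf_isRankOneProj_eq_top
    span_setOf_isRankOneProj_eq_top fun p hp q hq => hM p q hp hq, ?_⟩
  rw [← range_segrePullback]
  exact (LinearMap.coe_range (segrePullback (Fin n) (Fin m))).symm

/-- Core of the Segre pull-back isomorphism: the map `M ↦ ((p,q) ↦ tr(M (p ⊗ₖ q)))`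
on pairs of rank-one orthogonal projections is injective, and its range is exactly
the span of the product functions `(p,q) ↦ tr(Ap) tr(Bq)`. -/
theorem segre_pullback_iso (n m : ℕ) (hn : 2 < n) (hm : 2 < m) :
    (∀ M : Matrix (Fin n × Fin m) (Fin n × Fin m) ℂ,
      (∀ (p : Matrix (Fin n) (Fin n) ℂ) (q : Matrix (Fin m) (Fin m) ℂ),
        IsRankOneProj p → IsRankOneProj q → (M * (p ⊗ₖ q)).trace = 0) → M = 0)
    ∧ (Set.range (fun (M : Matrix (Fin n × Fin m) (Fin n × Fin m) ℂ)
          (pq : {p : Matrix (Fin n) (Fin n) ℂ // IsRankOneProj p}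
                × {q : Matrix (Fin m) (Fin m) ℂ // IsRankOneProj q}) =>
          (M * ((pq.1 : Matrix (Fin n) (Fin n) ℂ) ⊗ₖ (pq.2 : Matrix (Fin m) (Fin m) ℂ))).trace)
        = ↑(Submodule.span ℂ
            {g : {p : Matrix (Fin n) (Fin n) ℂ // IsRankOneProj p}
                 × {q : Matrix (Fin m) (Fin m) ℂ // IsRankOneProj q} → ℂ |
              ∃ (A : Matrix (Fin n) (Fin n) ℂ) (B : Matrix (Fin m) (Fin m) ℂ),
                g = fun pq => (A * (pq.1 : Matrix (Fin n) (Fin n) ℂ)).trace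
                              * (B * (pq.2 : Matrix (Fin m) (Fin m) ℂ)).trace})) :=
  segre_pullback_iso_general n m
end

section
/- (Separability of pure states: E vanishes exactly on separable pure states.) Let n > 2 and m > 2, let ψ ∈ ℂ^{Fin n × Fin m} be a unit vector and σ = ψψᴴ the associated pure density matrix. Then tr(σ·(p ⊗ₖ q)) = tr((tr₂σ)·p)·tr((tr₁σ)·q) holds for all rank-one orthogonal projections p on ℂⁿ and q on ℂᵐ if and only if ψ is a product vector, i.e., there exist unit vectors u ∈ ℂⁿ and v ∈ ℂᵐ with ψ(i,k) = u(i)·v(k) for all i, k (equivalently σ = (uuᴴ) ⊗ₖ (vvᴴ)). -/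
open Matrix Kronecker

/-- Partial trace over the second factor. -/
noncomputable def ptrace2 {n m : ℕ} (M : Matrix (Fin n × Fin m) (Fin n × Fin m) ℂ) :
    Matrix (Fin n) (Fin n) ℂ :=
  Matrix.of fun i j => ∑ k : Fin m, M (i, k) (j, k)

/-- Partial trace over the first factor. -/
noncomputable def ptrace1 {n m : ℕ} (M : Matrix (Fin n × Fin m) (Fin n × Fin m) ℂ) :
    Matrix (Fin m) (Fin m) ℂ :=
  Matrix.of fun k l => ∑ i : Fin n, M (i, k) (i, l)

/-!
Testing the identity with `p = eᵢeᵢᴴ` makes both sides linear in `q`; since over `ℂ` a matrix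
is determined by its values `xᴴAx` on unit vectors, it says that the outer product of the `i`-th
row of `ψ` (read as an `n × m` matrix) is a multiple of `tr₁σ`. So all rows of `ψ` are
proportional, i.e. `ψ` is a product vector, which can then be normalized. Conversely, for
`ψ = u ⊗ v` the state is `(uuᴴ) ⊗ₖ (vvᴴ)`, its partial traces are `uuᴴ` and `vvᴴ`, and the
identity is the multiplicativity of the trace on Kronecker products.
-/

namespace Matrix

variable {ι κ : Type*}

theorem star_dotProduct_self_eq_norm_sq [Fintype ι] (x : ι → ℂ) :
    star x ⬝ᵥ x = (‖WithLp.toLp 2 x‖ : ℂ) ^ 2 := by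
  have := inner_self_eq_norm_sq_to_K (𝕜 := ℂ) (WithLp.toLp 2 x)
  rwa [EuclideanSpace.inner_eq_star_dotProduct, dotProduct_comm] at this

theorem trace_mul_vecMulVec_star_s13 [Fintype ι] (A : Matrix ι ι ℂ) (x : ι → ℂ) :
    (A * vecMulVec x (star x)).trace = star x ⬝ᵥ A *ᵥ x := by
  rw [mul_vecMulVec, trace_vecMulVec, dotProduct_comm]

theorem isRankOneProj_vecMulVec_star [Fintype ι] [DecidableEq ι] {w : ι → ℂ}
    (hw : star w ⬝ᵥ w = 1) : IsRankOneProj (vecMulVec w (star w)) := by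
  obtain ⟨j, hj⟩ : ∃ j, w j ≠ 0 := Function.ne_iff.mp (by rintro rfl; simp at hw)
  refine ⟨by simp [IsHermitian, conjTranspose_vecMulVec], by
    rw [vecMulVec_mul_vecMulVec, hw, one_smul], le_antisymm (rank_vecMulVec_le _ _) ?_⟩
  rw [Nat.one_le_iff_ne_zero, rank_eq_finrank_span_cols, Ne, Submodule.finrank_eq_zero,
    Submodule.span_eq_bot]
  simp only [Set.mem_range, forall_exists_index, forall_apply_eq_imp_iff, not_forall]
  exact ⟨j, fun h => by simpa [hj, vecMulVec_apply] using congr_fun h j⟩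

theorem isRankOneProj_single [Fintype ι] [DecidableEq ι] (i : ι) :
    IsRankOneProj (single i i (1 : ℂ)) := by
  simpa [← single_eq_single_vecMulVec_single] using
    isRankOneProj_vecMulVec_star (w := Pi.single i (1 : ℂ)) (by simp)

theorem eq_of_forall_star_dotProduct_mulVec_eq [Fintype ι] [DecidableEq ι] {A B : Matrix ι ι ℂ}
    (h : ∀ x : ι → ℂ, star x ⬝ᵥ x = 1 → star x ⬝ᵥ A *ᵥ x = star x ⬝ᵥ B *ᵥ x) : A = B := by
  have hquad : ∀ x : ι → ℂ, star x ⬝ᵥ (A - B) *ᵥ x = 0 := by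
    intro x
    rcases eq_or_ne x 0 with rfl | hx
    · simp
    set N : ℂ := (‖WithLp.toLp 2 x‖ : ℂ)
    have hN : N ≠ 0 := by simpa [N] using hx
    have hNstar : star N = N := Complex.conj_ofReal _
    have hNx : star x ⬝ᵥ x = N ^ 2 := star_dotProduct_self_eq_norm_sq x
    have hunit := h (N⁻¹ • x) (by
      rw [star_smul, smul_dotProduct, dotProduct_smul, hNx]
      simp only [star_inv₀, hNstar, smul_eq_mul]
      field_simp)
    simp only [star_smul, mulVec_smul, smul_dotProduct, dotProduct_smul, smul_eq_mul] at hunit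
    rw [sub_mulVec, dotProduct_sub, sub_eq_zero]
    exact mul_left_cancel₀ (star_ne_zero.2 (inv_ne_zero hN))
      (mul_left_cancel₀ (inv_ne_zero hN) hunit)
  rw [← sub_eq_zero, ← (toLpLin 2 2).map_eq_zero_iff]
  refine (inner_map_self_eq_zero _).1 fun x => ?_
  rw [← inner_conj_symm, EuclideanSpace.inner_eq_star_dotProduct, ofLp_toLpLin, toLin'_apply,
    dotProduct_comm, hquad, map_zero]

theorem eq_of_forall_trace_mul_isRankOneProj [Fintype ι] [DecidableEq ι] {A B : Matrix ι ι ℂ}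
    (h : ∀ q, IsRankOneProj q → (A * q).trace = (B * q).trace) : A = B :=
  eq_of_forall_star_dotProduct_mulVec_eq fun x hx => by
    simpa only [trace_mul_vecMulVec_star_s13] using h _ (isRankOneProj_vecMulVec_star hx)

theorem trace_vecMulVec_star_mul_single_kronecker [Fintype ι] [Fintype κ] [DecidableEq ι]
    (ψ : ι × κ → ℂ) (i : ι) (q : Matrix κ κ ℂ) :
    (vecMulVec ψ (star ψ) * (single i i 1 ⊗ₖ q)).trace =
      (vecMulVec (Function.curry ψ i) (star (Function.curry ψ i)) * q).trace := by
  simp [trace, mul_apply, vecMulVec_apply, single_apply, Fintype.sum_prod_type, ite_and,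
    Finset.sum_ite_eq]

theorem vecMulVec_star_eq_kronecker {ψ : ι × κ → ℂ} {u : ι → ℂ} {v : κ → ℂ}
    (h : ∀ i k, ψ (i, k) = u i * v k) :
    vecMulVec ψ (star ψ) = vecMulVec u (star u) ⊗ₖ vecMulVec v (star v) := by
  ext ⟨i, k⟩ ⟨j, l⟩
  simp only [vecMulVec_apply, kroneckerMap_apply, Pi.star_apply, h, star_mul']
  ring

theorem exists_eq_smul_of_vecMulVec_star_eq_smul {a b : ι → ℂ} {t : ℂ} (hb : b ≠ 0)
    (h : vecMulVec a (star a) = t • vecMulVec b (star b)) : ∃ c : ℂ, a = c • b := by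
  obtain ⟨l, hl⟩ : ∃ l, b l ≠ 0 := Function.ne_iff.mp hb
  have hentry k l : a k * star (a l) = t * (b k * star (b l)) := by
    simpa [vecMulVec_apply] using congr_fun₂ h k l
  by_cases hal : a l = 0
  · have ht : t = 0 := by simpa [hal, hl] using hentry l l
    refine ⟨0, funext fun k => ?_⟩
    simpa [ht] using hentry k k
  · refine ⟨t * star (b l) / star (a l), funext fun k => ?_⟩
    rw [Pi.smul_apply, smul_eq_mul, div_mul_eq_mul_div, eq_div_iff (star_ne_zero.2 hal)]
    linear_combination hentry k l

theorem exists_mul_of_vecMulVec_curry_eq_smul {ψ : ι × κ → ℂ} (hψ : ψ ≠ 0) {r : ι → ℂ}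
    {G : Matrix κ κ ℂ}
    (h : ∀ i, vecMulVec (Function.curry ψ i) (star (Function.curry ψ i)) = r i • G) :
    ∃ (a : ι → ℂ) (b : κ → ℂ), ∀ i k, ψ (i, k) = a i * b k := by
  obtain ⟨⟨i₀, k₀⟩, hψ₀⟩ := Function.ne_iff.mp hψ
  have hb : Function.curry ψ i₀ ≠ 0 := Function.ne_iff.mpr ⟨k₀, hψ₀⟩
  have hr : r i₀ ≠ 0 := by
    intro hr
    simpa [hr, hb] using h i₀
  have hrow i : ∃ c : ℂ, Function.curry ψ i = c • Function.curry ψ i₀ :=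
    exists_eq_smul_of_vecMulVec_star_eq_smul hb
      (by rw [h i, h i₀, smul_smul, div_mul_cancel₀ _ hr])
  choose c hc using hrow
  exact ⟨c, Function.curry ψ i₀, fun i k => congr_fun (hc i) k⟩

theorem exists_unit_mul_of_mul [Fintype ι] [Fintype κ] {ψ : ι × κ → ℂ}
    (hψ : star ψ ⬝ᵥ ψ = 1) {a : ι → ℂ} {b : κ → ℂ} (hab : ∀ i k, ψ (i, k) = a i * b k) :
    ∃ (u : ι → ℂ) (v : κ → ℂ), star u ⬝ᵥ u = 1 ∧ star v ⬝ᵥ v = 1 ∧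
      ∀ i k, ψ (i, k) = u i * v k := by
  have hnorm : (star a ⬝ᵥ a) * (star b ⬝ᵥ b) = 1 := by
    rw [← hψ]
    simp only [dotProduct, Fintype.sum_prod_type, Pi.star_apply, hab, Finset.sum_mul_sum,
      star_mul']
    exact Finset.sum_congr rfl fun i _ => Finset.sum_congr rfl fun k _ => by ring
  set N : ℂ := (‖WithLp.toLp 2 b‖ : ℂ)
  have hNstar : star N = N := Complex.conj_ofReal _
  have hNb : star b ⬝ᵥ b = N ^ 2 := star_dotProduct_self_eq_norm_sq b
  have hN : N ≠ 0 := by rintro h; simp [hNb, h] at hnorm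
  refine ⟨N • a, N⁻¹ • b, ?_, ?_, fun i k => ?_⟩
  · simp only [star_smul, smul_dotProduct, dotProduct_smul, hNstar, smul_eq_mul]
    linear_combination hnorm - star a ⬝ᵥ a * hNb
  · simp only [star_smul, smul_dotProduct, dotProduct_smul, star_inv₀, hNstar, hNb, smul_eq_mul]
    field_simp
  · simp only [hab, Pi.smul_apply, smul_eq_mul]
    field_simp

end Matrix

theorem ptrace2_kronecker {n m : ℕ} (A : Matrix (Fin n) (Fin n) ℂ)
    (B : Matrix (Fin m) (Fin m) ℂ) : ptrace2 (A ⊗ₖ B) = B.trace • A := by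
  ext i j
  simp [ptrace2, trace, Finset.mul_sum, mul_comm]

theorem ptrace1_kronecker {n m : ℕ} (A : Matrix (Fin n) (Fin n) ℂ)
    (B : Matrix (Fin m) (Fin m) ℂ) : ptrace1 (A ⊗ₖ B) = A.trace • B := by
  ext k l
  simp [ptrace1, trace, Finset.sum_mul]

theorem pure_separability_general (n m : ℕ)
    (ψ : Fin n × Fin m → ℂ) (hψ : star ψ ⬝ᵥ ψ = 1)
    (σ : Matrix (Fin n × Fin m) (Fin n × Fin m) ℂ)
    (hσ : σ = Matrix.vecMulVec ψ (star ψ)) :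
    (∀ (p : Matrix (Fin n) (Fin n) ℂ) (q : Matrix (Fin m) (Fin m) ℂ),
        IsRankOneProj p → IsRankOneProj q →
        (σ * (p ⊗ₖ q)).trace = (ptrace2 σ * p).trace * (ptrace1 σ * q).trace)
      ↔ ∃ (u : Fin n → ℂ) (v : Fin m → ℂ),
          star u ⬝ᵥ u = 1 ∧ star v ⬝ᵥ v = 1 ∧
          ∀ (i : Fin n) (k : Fin m), ψ (i, k) = u i * v k := by
  subst hσ
  constructor
  · intro h
    have hrow i : vecMulVec (Function.curry ψ i) (star (Function.curry ψ i)) =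
        (ptrace2 (vecMulVec ψ (star ψ)) * single i i 1).trace • ptrace1 (vecMulVec ψ (star ψ)) :=
      eq_of_forall_trace_mul_isRankOneProj fun q hq => by
        rw [smul_mul_assoc, trace_smul, smul_eq_mul, ← trace_vecMulVec_star_mul_single_kronecker]
        exact h _ q (isRankOneProj_single i) hq
    obtain ⟨a, b, hab⟩ := exists_mul_of_vecMulVec_curry_eq_smul (by rintro rfl; simp at hψ) hrow
    exact exists_unit_mul_of_mul hψ hab
  · rintro ⟨u, v, hu, hv, huv⟩ p q - -
    rw [vecMulVec_star_eq_kronecker huv, ← mul_kronecker_mul, trace_kronecker, ptrace2_kronecker,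
      ptrace1_kronecker, trace_vecMulVec, trace_vecMulVec, dotProduct_comm u, dotProduct_comm v,
      hu, hv, one_smul, one_smul]

/-- Separability of pure states: for a pure state `σ = ψψᴴ`, the defect
`tr(σ(p ⊗ₖ q)) = tr((tr₂σ)p)·tr((tr₁σ)q)` holds for all rank-one orthogonal
projections `p`, `q` iff `ψ` is a product vector. -/
theorem pure_separability (n m : ℕ) (hn : 2 < n) (hm : 2 < m)
    (ψ : Fin n × Fin m → ℂ) (hψ : star ψ ⬝ᵥ ψ = 1)
    (σ : Matrix (Fin n × Fin m) (Fin n × Fin m) ℂ)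
    (hσ : σ = Matrix.vecMulVec ψ (star ψ)) :
    (∀ (p : Matrix (Fin n) (Fin n) ℂ) (q : Matrix (Fin m) (Fin m) ℂ),
        IsRankOneProj p → IsRankOneProj q →
        (σ * (p ⊗ₖ q)).trace = (ptrace2 σ * p).trace * (ptrace1 σ * q).trace)
      ↔ ∃ (u : Fin n → ℂ) (v : Fin m → ℂ),
          star u ⬝ᵥ u = 1 ∧ star v ⬝ᵥ v = 1 ∧
          ∀ (i : Fin n) (k : Fin m), ψ (i, k) = u i * v k :=
  pure_separability_general n m ψ hψ σ hσ
end
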